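/- arXiv:2207.07348 — 2 statements merged into one kernel-verified Lean document; each statement's English description precedes it below -/
import Mathlib

section
/- Under the gradient estimator k̂' = γφ²(k - k̂) with γ > 0, if ∫₀ᵗ φ(τ)² dτ → ∞ as t → ∞, then k̂(t) → k as t → ∞. -/
open Filter

theorem stmt5 (γ k : ℝ) (hγ : 0 < γ) (φ : ℝ → ℝ) (hφ : Continuous φ)
    (khat : ℝ → ℝ)
    (hk : ∀ t, HasDerivAt khat (γ * φ t ^ 2 * (k - khat t)) t)
    (hPE : Tendsto (fun t => ∫ τ in (0:ℝ)..t, φ τ ^ 2) atTop atTop) :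
    Tendsto khat atTop (nhds k) := by
  set F : ℝ → ℝ := fun t => ∫ τ in (0:ℝ)..t, φ τ ^ 2 with hF
  have hFd : ∀ t, HasDerivAt F (φ t ^ 2) t := fun t =>
    intervalIntegral.integral_hasDerivAt_right ((hφ.pow 2).intervalIntegrable _ _)
      ((hφ.pow 2).stronglyMeasurableAtFilter _ _) (hφ.pow 2).continuousAt
  set g : ℝ → ℝ := fun t => (k - khat t) * Real.exp (γ * F t) with hg
  have hgd : ∀ t, HasDerivAt g 0 t := by
    intro t
    have h1 : HasDerivAt (fun t => k - khat t) (-(γ * φ t ^ 2 * (k - khat t))) t :=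
      (hk t).const_sub k
    have h2 : HasDerivAt (fun t => Real.exp (γ * F t)) (γ * φ t ^ 2 * Real.exp (γ * F t)) t := by
      have := ((hFd t).const_mul γ).exp
      convert this using 1
      ring
    have := h1.mul h2
    exact this.congr_deriv (by ring)
  have hconst : ∀ t, g t = g 0 := fun t =>
    is_const_of_deriv_eq_zero (fun x => (hgd x).differentiableAt)
      (fun x => (hgd x).deriv) t 0
  have hF0 : F 0 = 0 := intervalIntegral.integral_same
  have hrep : ∀ t, khat t = k - (k - khat 0) * Real.exp (-(γ * F t)) := by
    intro t
    have h := hconst t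
    simp only [hg, hF0, mul_zero, Real.exp_zero, mul_one] at h
    have h' : k - khat t = (k - khat 0) * Real.exp (-(γ * F t)) := by
      rw [Real.exp_neg, ← div_eq_mul_inv, eq_div_iff (Real.exp_ne_zero _)]
      exact h
    linarith
  have hFtop : Tendsto F atTop atTop := hPE
  have hexp : Tendsto (fun t => Real.exp (-(γ * F t))) atTop (nhds 0) :=
    Real.tendsto_exp_atBot.comp (tendsto_neg_atTop_atBot.comp (hFtop.const_mul_atTop hγ))
  have : Tendsto (fun t => k - (k - khat 0) * Real.exp (-(γ * F t))) atTop (nhds k) := by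
    have := (tendsto_const_nhds (x := k)).sub ((tendsto_const_nhds (x := k - khat 0)).mul hexp)
    simpa using this
  exact this.congr fun t => (hrep t).symm
end

section
/- If ε(t) = c·exp(-γ∫₀ᵗ φ(τ)²dτ) with c ∈ ℝ, γ > 0, and there exist T, δ > 0 such that ∫ₜ^{t+T} φ² ≥ δ for all t ≥ 0 (persistent excitation), then ε(t)·t → 0 as t → ∞. -/
open Filter

theorem stmt18 (γ c : ℝ) (hγ : 0 < γ) (φ : ℝ → ℝ) (hφ : Measurable φ)
    (ε : ℝ → ℝ)
    (hε : ∀ t, ε t = c * Real.exp (-γ * ∫ τ in (0:ℝ)..t, φ τ ^ 2))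
    (hPE : ∃ T δ : ℝ, 0 < T ∧ 0 < δ ∧
      ∀ t ≥ (0:ℝ), δ ≤ ∫ τ in t..(t + T), φ τ ^ 2) :
    Tendsto (fun t => ε t * t) atTop (nhds 0) := by
  obtain ⟨T, δ, hT, hδ, hPE⟩ := hPE
  -- integrability on each window
  have hint : ∀ t : ℝ, 0 ≤ t →
      IntervalIntegrable (fun τ => φ τ ^ 2) MeasureTheory.volume t (t + T) := by
    intro t ht
    by_contra h
    have h2 := hPE t ht
    rw [intervalIntegral.integral_undef h] at h2
    linarith
  have hintN : ∀ n : ℕ,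
      IntervalIntegrable (fun τ => φ τ ^ 2) MeasureTheory.volume 0 (n * T) := by
    intro n
    induction n with
    | zero => simp
    | succ n ih =>
      have h2 := hint ((n : ℝ) * T) (by positivity)
      have h3 : ((n + 1 : ℕ) : ℝ) * T = (n : ℝ) * T + T := by push_cast; ring
      rw [h3]
      exact ih.trans h2
  have hint0 : ∀ t : ℝ, 0 ≤ t →
      IntervalIntegrable (fun τ => φ τ ^ 2) MeasureTheory.volume 0 t := by
    intro t ht
    obtain ⟨n, hn⟩ := exists_nat_ge (t / T)
    have hn' : t ≤ (n : ℝ) * T := by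
      rw [div_le_iff₀ hT] at hn; linarith
    apply (hintN n).mono_set
    rw [Set.uIcc_of_le ht, Set.uIcc_of_le (ht.trans hn')]
    exact Set.Icc_subset_Icc le_rfl hn'
  -- lower bound at multiples of T
  have hlow : ∀ n : ℕ, (n : ℝ) * δ ≤ ∫ τ in (0:ℝ)..((n : ℝ) * T), φ τ ^ 2 := by
    intro n
    induction n with
    | zero => simp
    | succ n ih =>
      have hadj := intervalIntegral.integral_add_adjacent_intervals (hintN n)
        (hint ((n : ℝ) * T) (by positivity))
      have hpe := hPE ((n : ℝ) * T) (by positivity)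
      have h3 : ((n + 1 : ℕ) : ℝ) * T = (n : ℝ) * T + T := by push_cast; ring
      rw [h3, ← hadj]
      push_cast
      linarith
  -- lower bound for all t ≥ 0
  have hI : ∀ t : ℝ, 0 ≤ t → δ * t / T - δ ≤ ∫ τ in (0:ℝ)..t, φ τ ^ 2 := by
    intro t ht
    set n : ℕ := ⌊t / T⌋₊ with hn
    have hnle : (n : ℝ) ≤ t / T := Nat.floor_le (by positivity)
    have hlt : t / T < (n : ℝ) + 1 := Nat.lt_floor_add_one _
    have hnT : (n : ℝ) * T ≤ t := (le_div_iff₀ hT).mp hnle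
    have hmono : IntervalIntegrable (fun τ => φ τ ^ 2) MeasureTheory.volume ((n : ℝ) * T) t :=
      (hint0 t ht).mono_set (by
        rw [Set.uIcc_of_le ht, Set.uIcc_of_le hnT]
        exact Set.Icc_subset_Icc (by positivity) le_rfl)
    have hadj := intervalIntegral.integral_add_adjacent_intervals (hintN n) hmono
    have hnonneg : (0 : ℝ) ≤ ∫ τ in ((n : ℝ) * T)..t, φ τ ^ 2 :=
      intervalIntegral.integral_nonneg hnT (fun x _ => by positivity)
    have h1 := hlow n
    have h2 : δ * t / T - δ ≤ (n : ℝ) * δ := by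
      have : δ * (t / T) < δ * ((n : ℝ) + 1) := by
        exact (mul_lt_mul_iff_right₀ hδ).mpr hlt
      rw [mul_div_assoc]
      nlinarith
    rw [← hadj]
    linarith
  -- squeeze
  have key : Tendsto (fun t => |ε t * t|) atTop (nhds 0) := by
    have hg : Tendsto (fun t : ℝ => |c| * Real.exp (γ * δ) *
        (t * Real.exp (-(γ * δ / T * t)))) atTop (nhds 0) := by
      have h1 : Tendsto (fun x : ℝ => x ^ 1 * Real.exp (-x)) atTop (nhds 0) :=
        Real.tendsto_pow_mul_exp_neg_atTop_nhds_zero 1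
      have h2 : Tendsto (fun t : ℝ => γ * δ / T * t) atTop atTop :=
        Tendsto.const_mul_atTop (by positivity) tendsto_id
      have h3 := (h1.comp h2).const_mul (T / (γ * δ))
      have heq : (fun t : ℝ => T / (γ * δ) *
          ((fun x : ℝ => x ^ 1 * Real.exp (-x)) ∘ (fun t : ℝ => γ * δ / T * t)) t)
          = fun t : ℝ => t * Real.exp (-(γ * δ / T * t)) := by
        funext t
        simp only [Function.comp_apply, pow_one]
        rw [← mul_assoc]
        congr 1
        field_simp
      rw [heq, mul_zero] at h3
      have := h3.const_mul (|c| * Real.exp (γ * δ))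
      simpa using this
    refine squeeze_zero' (Eventually.of_forall fun t => abs_nonneg _) ?_ hg
    filter_upwards [eventually_ge_atTop (0 : ℝ)] with t ht
    rw [hε t, abs_mul, abs_mul, abs_of_nonneg ht,
      abs_of_nonneg (Real.exp_nonneg _)]
    have hexp : Real.exp (-γ * ∫ τ in (0:ℝ)..t, φ τ ^ 2)
        ≤ Real.exp (γ * δ) * Real.exp (-(γ * δ / T * t)) := by
      rw [← Real.exp_add]
      apply Real.exp_le_exp.mpr
      have h4 := hI t ht
      have h5 : γ * (δ * t / T - δ) ≤ γ * ∫ τ in (0:ℝ)..t, φ τ ^ 2 :=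
        (mul_le_mul_iff_right₀ hγ).mpr h4
      have h6 : γ * δ / T * t = γ * (δ * t / T) := by ring
      linarith
    calc |c| * Real.exp (-γ * ∫ τ in (0:ℝ)..t, φ τ ^ 2) * t
        ≤ |c| * (Real.exp (γ * δ) * Real.exp (-(γ * δ / T * t))) * t := by
          apply mul_le_mul_of_nonneg_right _ ht
          exact mul_le_mul_of_nonneg_left hexp (abs_nonneg c)
      _ = |c| * Real.exp (γ * δ) * (t * Real.exp (-(γ * δ / T * t))) := by ring
  exact tendsto_zero_iff_abs_tendsto_zero _ |>.mpr key
end
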